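/- Let π be a group and suppose there exist an integer q ≥ 2 and a ℤ[π]-module B such that the group cohomology H^q(π; B) is nonzero. Then there exists a ℤ[π]-module A such that the group cohomology H²(π; A) is nonzero. -/

import Mathlib

/-!
Dimension shifting. Every representation `A` embeds into the coinduced module
`Coind_1^G(Res A) = Fun(G, A)` via `a ↦ (g ↦ g • a)`, and by Shapiro's lemma the coinduced
module has the cohomology of the trivial group, which vanishes in positive degrees. So the
connecting map of `0 ⟶ A ⟶ Coind_1^G(Res A) ⟶ C ⟶ 0` maps `Hⁿ(G; C)` onto `Hⁿ⁺¹(G; A)`, and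
a nonzero class in degree `q` can be pushed down one degree at a time to degree `2`.
-/

open CategoryTheory Limits

universe u v w

namespace Rep

variable {k : Type u} {G : Type v} {H : Type w} [CommRing k] [Monoid G] [Monoid H] (φ : G →* H)

lemma mono_resCoindToHom_id (B : Rep k H) : Mono (resCoindToHom φ B (res φ B) (𝟙 _)) := by
  rw [mono_iff_injective]
  intro b c h
  simpa using congrArg (fun f => f.1 1) h

end Rep

namespace groupCohomology

variable {k G : Type u} [CommRing k] [Group G]

lemma isZero_groupCohomology_coind_bot_succ (A : Rep.{u} k (⊥ : Subgroup G)) (n : ℕ) :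
    IsZero (groupCohomology (Rep.coind.{u} (⊥ : Subgroup G).subtype A) (n + 1)) :=
  (isZero_groupCohomology_succ_of_subsingleton A n).of_iso (coindIso A (n + 1))

lemma nontrivial_groupCohomology_X₃_of_isZero_X₂ {X : ShortComplex (Rep k G)}
    (hX : X.ShortExact) (n : ℕ) (h₂ : IsZero (groupCohomology X.X₂ (n + 1)))
    (h₁ : Nontrivial (groupCohomology X.X₁ (n + 1))) :
    Nontrivial (groupCohomology X.X₃ n) :=
  have := h₁
  ((ModuleCat.epi_iff_surjective _).1 (epi_δ_of_isZero hX n h₂)).nontrivial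

lemma shortExact_cokernelSequence_coindUnit (A : Rep.{u} k G) :
    (ShortComplex.cokernelSequence
      (Rep.resCoindToHom (⊥ : Subgroup G).subtype A _ (𝟙 _))).ShortExact :=
  have := Rep.mono_resCoindToHom_id (⊥ : Subgroup G).subtype A
  .mk' (ShortComplex.cokernelSequence_exact _) this inferInstance

lemma exists_nontrivial_groupCohomology_of_succ (A : Rep.{u} k G) (n : ℕ)
    (hA : Nontrivial (groupCohomology A (n + 1))) :
    ∃ C : Rep.{u} k G, Nontrivial (groupCohomology C n) :=
  ⟨_, nontrivial_groupCohomology_X₃_of_isZero_X₂ (shortExact_cokernelSequence_coindUnit A) n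
    (isZero_groupCohomology_coind_bot_succ _ n) hA⟩

theorem exists_nontrivial_groupCohomology_of_le {m n : ℕ} (hmn : m ≤ n) (A : Rep.{u} k G)
    (hA : Nontrivial (groupCohomology A n)) :
    ∃ C : Rep.{u} k G, Nontrivial (groupCohomology C m) := by
  induction hmn generalizing A with
  | refl => exact ⟨A, hA⟩
  | step _ ih =>
    obtain ⟨C, hC⟩ := exists_nontrivial_groupCohomology_of_succ A _ hA
    exact ih C hC

end groupCohomology

/-- If a group `π` has nonzero cohomology `H^q(π; B)` for some `q ≥ 2` and some
`ℤ[π]`-module `B`, then there is a `ℤ[π]`-module `A` with `H²(π; A) ≠ 0`. -/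
theorem exists_nonzero_H2_of_nonzero_Hq
    (π : Type) [Group π] (q : ℕ) (hq : 2 ≤ q) (B : Rep ℤ π)
    (hB : Nontrivial (groupCohomology B q)) :
    ∃ A : Rep ℤ π, Nontrivial (groupCohomology A 2) :=
  groupCohomology.exists_nontrivial_groupCohomology_of_le hq B hB
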